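/- arXiv:1307.3913 — 2 statements merged into one kernel-verified Lean document; each statement's English description precedes it below -/
import Mathlib

section
/- For any directed acyclic graph G with a unique sink, the pebbling contradiction Peb(G) is minimally unsatisfiable: removing any single clause from Peb(G) yields a satisfiable formula. -/
/-- The pebbling contradiction over a finite DAG with a unique sink is minimally
unsatisfiable: it is unsatisfiable, but removing any single clause (a source
axiom, a pebbling axiom, or the sink axiom) makes it satisfiable. -/
theorem stmt3 {V : Type} [Fintype V] (E : V → V → Prop)
    (hacyc : WellFounded E)
    (z : V) (hsink : ∀ w : V, ¬ E z w)
    (huniq : ∀ v : V, (∀ w : V, ¬ E v w) → v = z) :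
    (¬ ∃ α : V → Bool,
      (∀ s : V, (∀ u : V, ¬ E u s) → α s = true) ∧
      (∀ v : V, (∃ u : V, E u v) → (∀ u : V, E u v → α u = true) → α v = true) ∧
      α z = false) ∧
    (∀ s₀ : V, (∀ u : V, ¬ E u s₀) → ∃ α : V → Bool,
      (∀ s : V, (∀ u : V, ¬ E u s) → s ≠ s₀ → α s = true) ∧
      (∀ v : V, (∃ u : V, E u v) → (∀ u : V, E u v → α u = true) → α v = true) ∧
      α z = false) ∧
    (∀ v₀ : V, (∃ u : V, E u v₀) → ∃ α : V → Bool,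
      (∀ s : V, (∀ u : V, ¬ E u s) → α s = true) ∧
      (∀ v : V, (∃ u : V, E u v) → v ≠ v₀ →
        (∀ u : V, E u v → α u = true) → α v = true) ∧
      α z = false) ∧
    (∃ α : V → Bool,
      (∀ s : V, (∀ u : V, ¬ E u s) → α s = true) ∧
      (∀ v : V, (∃ u : V, E u v) → (∀ u : V, E u v → α u = true) → α v = true)) := by
  classical
  have hwfT : WellFounded (Relation.TransGen E) := hacyc.transGen
  have hirr : ∀ v, ¬ Relation.TransGen E v v := fun v h => hwfT.asymmetric v v h h
  have hwfF : WellFounded (fun a b => Relation.TransGen E b a) := by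
    have h1 : IsTrans V (fun a b => Relation.TransGen E b a) :=
      ⟨fun a b c hab hbc => hbc.trans hab⟩
    have h2 : IsIrrefl V (fun a b => Relation.TransGen E b a) := ⟨fun a h => hirr a h⟩
    exact Finite.wellFounded_of_trans_of_irrefl _
  have hreach : ∀ v, Relation.ReflTransGen E v z := by
    intro v
    induction v using hwfF.induction with
    | _ v ih =>
      by_cases h : ∀ w, ¬ E v w
      · rw [huniq v h]
      · push_neg at h
        obtain ⟨w, hw⟩ := h
        exact Relation.ReflTransGen.head hw (ih w (Relation.TransGen.single hw))
  refine ⟨?_, ?_, ?_, ?_⟩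
  · rintro ⟨α, h1, h2, h3⟩
    have key : ∀ v, α v = true := by
      intro v
      induction v using hacyc.induction with
      | _ v ih =>
        by_cases h : ∀ u, ¬ E u v
        · exact h1 v h
        · push_neg at h
          exact h2 v h ih
    rw [key z] at h3
    simp at h3
  · intro s₀ hs₀
    refine ⟨fun v => if Relation.ReflTransGen E s₀ v then false else true, ?_, ?_, ?_⟩
    · intro s hs hne
      have hnr : ¬ Relation.ReflTransGen E s₀ s := by
        intro hr
        rcases hr.cases_tail with h | ⟨u, _, hu⟩
        · exact hne h
        · exact hs u hu
      simp [hnr]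
    · rintro v ⟨u, hu⟩ hall
      have hnr : ¬ Relation.ReflTransGen E s₀ v := by
        intro hr
        rcases hr.cases_tail with h | ⟨w, hw, hwe⟩
        · exact hs₀ u (h ▸ hu)
        · have := hall w hwe
          simp [hw] at this
      simp [hnr]
    · simp [hreach s₀]
  · rintro v₀ ⟨u₀, hu₀⟩
    refine ⟨fun v => if Relation.ReflTransGen E v₀ v then false else true, ?_, ?_, ?_⟩
    · intro s hs
      have hnr : ¬ Relation.ReflTransGen E v₀ s := by
        intro hr
        rcases hr.cases_tail with h | ⟨u, _, hu⟩
        · exact hs u₀ (h ▸ hu₀)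
        · exact hs u hu
      simp [hnr]
    · rintro v ⟨u, hu⟩ hne hall
      have hnr : ¬ Relation.ReflTransGen E v₀ v := by
        intro hr
        rcases hr.cases_tail with h | ⟨w, hw, hwe⟩
        · exact hne h
        · have := hall w hwe
          simp [hw] at this
      simp [hnr]
    · simp [hreach v₀]
  · exact ⟨fun _ => true, fun _ _ => rfl, fun _ _ _ => rfl⟩
end

section
/- For any DAG G with a unique sink and maximal in-degree ℓ, if G has a complete black pebbling strategy in time τ and space s, then the pebbling contradiction Peb(G) has a resolution refutation of length O(τ) and clause space O(s), where the hidden constants depend only on ℓ. -/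
/-- A complete black pebbling of a DAG. -/
def IsBlackPebbling {V : Type} [DecidableEq V] (E : V → V → Prop) (z : V)
    (τ : ℕ) (P : ℕ → Finset V) : Prop :=
  P 0 = ∅ ∧ P τ = {z} ∧
  ∀ t < τ,
    (∃ v : V, v ∉ P t ∧ (∀ u, E u v → u ∈ P t) ∧ P (t + 1) = insert v (P t)) ∨
    (∃ v ∈ P t, P (t + 1) = (P t).erase v)

/-- The pebbling contradiction Peb(G): for every vertex v the clause
(⋁_{u ∈ pred(v)} ¬u) ∨ v (which is the unit clause v for sources), together
with the sink axiom ¬z. -/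
def pebFormula (V : Type) [Fintype V] [DecidableEq V] (E : V → V → Prop)
    [DecidableRel E] (z : V) : Finset (Finset (V × Bool)) :=
  insert {(z, false)}
    (Finset.univ.image (fun v : V =>
      insert (v, true)
        ((Finset.univ.filter (fun u => E u v)).image (fun u => (u, false)))))

section Aux
set_option linter.unusedSectionVars false

variable {V : Type} [Fintype V] [DecidableEq V] (E : V → V → Prop) [DecidableRel E] (z : V)

def RStep (A B : Finset (Finset (V × Bool))) : Prop :=
  (∃ C ∈ pebFormula V E z, B = insert C A) ∨
  (∃ C₁ ∈ A, ∃ C₂ ∈ A, ∃ x : V,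
      (x, true) ∈ C₁ ∧ (x, false) ∈ C₂ ∧
      B = insert (C₁.erase (x, true) ∪ C₂.erase (x, false)) A) ∨
  (∃ C ∈ A, B = A.erase C)

def Reach (A B : Finset (Finset (V × Bool))) (n k : ℕ) : Prop :=
  ∃ f : ℕ → Finset (Finset (V × Bool)),
    f 0 = A ∧ f n = B ∧ (∀ t < n, RStep E z (f t) (f (t+1))) ∧ ∀ t ≤ n, (f t).card ≤ k

variable {E z}

lemma reach_refl {A : Finset (Finset (V × Bool))} {k : ℕ} (h : A.card ≤ k) :
    Reach E z A A 0 k :=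
  ⟨fun _ => A, rfl, rfl, fun t ht => by omega, fun t _ => h⟩

lemma reach_single {A B : Finset (Finset (V × Bool))} {k : ℕ}
    (hs : RStep E z A B) (hA : A.card ≤ k) (hB : B.card ≤ k) :
    Reach E z A B 1 k := by
  refine ⟨fun t => if t = 0 then A else B, by simp, by simp, ?_, ?_⟩
  · intro t ht
    interval_cases t
    simpa using hs
  · intro t _
    dsimp only
    split <;> assumption

lemma reach_trans {A B C : Finset (Finset (V × Bool))} {n m k : ℕ}
    (h1 : Reach E z A B n k) (h2 : Reach E z B C m k) :
    Reach E z A C (n + m) k := by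
  obtain ⟨f, hf0, hfn, hfs, hfc⟩ := h1
  obtain ⟨g, hg0, hgm, hgs, hgc⟩ := h2
  refine ⟨fun t => if t ≤ n then f t else g (t - n), by simp [hf0], ?_, ?_, ?_⟩
  · by_cases hm : n + m ≤ n
    · have : m = 0 := by omega
      simp [hm, hfn, this, ← hg0, ‹m = 0› ▸ hgm]
    · simp only [if_neg hm]
      simpa using hgm
  · intro t ht
    by_cases h1' : t + 1 ≤ n
    · simp only [if_pos (by omega : t ≤ n), if_pos h1']
      exact hfs t (by omega)
    · by_cases h2' : t ≤ n
      · have htn : t = n := by omega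
        subst htn
        simp only
        rw [if_pos le_rfl, if_neg h1', show t + 1 - t = 1 from by omega, hfn, ← hg0]
        exact hgs 0 (by omega)
      · simp only [if_neg h2', if_neg h1']
        have : t + 1 - n = (t - n) + 1 := by omega
        rw [this]
        exact hgs (t - n) (by omega)
  · intro t _
    dsimp only
    split
    · exact hfc t (by omega)
    · exact hgc (t - n) (by omega)

lemma derive_unit (v : V) (S : Finset V) (A : Finset (Finset (V × Bool))) (k : ℕ)
    (hA : ∀ C ∈ A, ∃ w : V, C = ({(w, true)} : Finset (V × Bool)))
    (hk : A.card + 2 ≤ k)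
    (hu : ∀ u ∈ S, ({(u, true)} : Finset (V × Bool)) ∈ A) :
    Reach E z (insert (insert (v, true) (S.image (fun u => (u, false)))) A)
      (insert ({(v, true)} : Finset (V × Bool)) A) (2 * S.card) k := by
  induction S using Finset.induction_on with
  | empty =>
    simp only [Finset.image_empty, Finset.card_empty, Nat.mul_zero]
    have : insert ((v, true) : V × Bool) ∅ = ({(v, true)} : Finset (V × Bool)) := rfl
    rw [this]
    exact reach_refl (le_trans (Finset.card_insert_le _ _) (by omega))
  | @insert a S ha ih =>
    set Cnext : Finset (V × Bool) := insert (v, true) (S.image (fun u => (u, false))) with hCnext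
    set Cfull : Finset (V × Bool) :=
      insert (v, true) ((insert a S).image (fun u => (u, false))) with hCfull
    have hafalse : ((a, false) : V × Bool) ∈ Cfull := by
      simp [hCfull]
    have hanotnext : ((a, false) : V × Bool) ∉ Cnext := by
      simp only [hCnext, Finset.mem_insert, Finset.mem_image, Prod.mk.injEq]
      push_neg
      refine ⟨by simp, fun u hu' => ?_⟩
      intro h
      exact absurd (h ▸ hu') ha
    have hfull_eq : Cfull = insert (a, false) Cnext := by
      rw [hCfull, hCnext, Finset.image_insert, Finset.insert_comm]
    have hCne : Cfull ≠ Cnext := by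
      intro h; rw [h] at hafalse; exact hanotnext hafalse
    have hCfull_notA : Cfull ∉ A := by
      intro h
      obtain ⟨w, hw⟩ := hA _ h
      rw [hw] at hafalse
      simp at hafalse
    have haA : ({(a, true)} : Finset (V × Bool)) ∈ A := hu a (Finset.mem_insert_self _ _)
    have herase : Cfull.erase (a, false) = Cnext := by
      rw [hfull_eq, Finset.erase_insert hanotnext]
    have step1 : RStep E z (insert Cfull A) (insert Cnext (insert Cfull A)) := by
      refine Or.inr (Or.inl ⟨{(a, true)}, Finset.mem_insert_of_mem haA, Cfull,
        Finset.mem_insert_self _ _, a, Finset.mem_singleton_self _, hafalse, ?_⟩)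
      rw [Finset.erase_singleton, Finset.empty_union, herase]
    have step2 : RStep E z (insert Cnext (insert Cfull A)) (insert Cnext A) := by
      refine Or.inr (Or.inr ⟨Cfull, by simp, ?_⟩)
      rw [Finset.erase_insert_of_ne hCne.symm, Finset.erase_insert hCfull_notA]
    have r1 : Reach E z (insert Cfull A) (insert Cnext (insert Cfull A)) 1 k :=
      reach_single step1 (le_trans (Finset.card_insert_le _ _) (by omega))
        (le_trans (le_trans (Finset.card_insert_le _ _)
          (Nat.add_le_add_right (Finset.card_insert_le _ _) 1)) (by omega))
    have r2 : Reach E z (insert Cnext (insert Cfull A)) (insert Cnext A) 1 k :=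
      reach_single step2
        (le_trans (le_trans (Finset.card_insert_le _ _)
          (Nat.add_le_add_right (Finset.card_insert_le _ _) 1)) (by omega))
        (le_trans (Finset.card_insert_le _ _) (by omega))
    have r3 := ih (fun u hu' => hu u (Finset.mem_insert_of_mem hu'))
    have := reach_trans r1 (reach_trans r2 r3)
    have hcount : 1 + (1 + 2 * S.card) = 2 * (insert a S).card := by
      rw [Finset.card_insert_of_notMem ha]; ring
    rwa [hcount] at this

def units (T : Finset V) : Finset (Finset (V × Bool)) :=
  T.image (fun w => ({(w, true)} : Finset (V × Bool)))

lemma units_inj : Function.Injective (fun w : V => ({(w, true)} : Finset (V × Bool))) := by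
  intro a b h
  simp only at h
  have : (a, true) ∈ ({(b, true)} : Finset (V × Bool)) := h ▸ Finset.mem_singleton_self _
  simpa using this

lemma units_card (T : Finset V) : (units T).card = T.card :=
  Finset.card_image_of_injective _ units_inj

lemma units_insert (v : V) (T : Finset V) :
    units (insert v T) = insert ({(v, true)} : Finset (V × Bool)) (units T) :=
  Finset.image_insert _ _ _

lemma units_erase (v : V) (T : Finset V) :
    units (T.erase v) = (units T).erase ({(v, true)} : Finset (V × Bool)) :=
  Finset.image_erase units_inj _ _

variable (E z)

lemma reach_place (v : V) (T : Finset V) (k : ℕ)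
    (hp : ∀ u, E u v → u ∈ T) (hk : T.card + 2 ≤ k) :
    Reach E z (units T) (units (insert v T))
      (1 + 2 * (Finset.univ.filter (fun u => E u v)).card) k := by
  set S : Finset V := Finset.univ.filter (fun u => E u v) with hS
  set Cfull : Finset (V × Bool) := insert (v, true) (S.image (fun u => (u, false))) with hCfull
  have hmem : Cfull ∈ pebFormula V E z := by
    exact Finset.mem_insert_of_mem (Finset.mem_image_of_mem _ (Finset.mem_univ v))
  have step1 : RStep E z (units T) (insert Cfull (units T)) := Or.inl ⟨Cfull, hmem, rfl⟩
  have r1 : Reach E z (units T) (insert Cfull (units T)) 1 k :=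
    reach_single step1 (by rw [units_card]; omega)
      (le_trans (Finset.card_insert_le _ _) (by rw [units_card]; omega))
  have r2 : Reach E z (insert Cfull (units T))
      (insert ({(v, true)} : Finset (V × Bool)) (units T)) (2 * S.card) k := by
    refine derive_unit v S (units T) k ?_ (by rw [units_card]; omega) ?_
    · intro C hC
      obtain ⟨w, _, hw⟩ := Finset.mem_image.mp hC
      exact ⟨w, hw.symm⟩
    · intro u hu
      exact Finset.mem_image_of_mem _ (hp u (by simpa [hS] using hu))
  rw [units_insert]
  exact reach_trans r1 r2

lemma reach_remove (v : V) (T : Finset V) (k : ℕ)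
    (hv : v ∈ T) (hk : T.card ≤ k) :
    Reach E z (units T) (units (T.erase v)) 1 k := by
  rw [units_erase]
  refine reach_single (Or.inr (Or.inr ⟨{(v, true)}, Finset.mem_image_of_mem _ hv, rfl⟩))
    (by rw [units_card]; omega)
    (le_trans (Finset.card_erase_le) (by rw [units_card]; omega))

lemma reach_sim (ℓ : ℕ) (hdeg : ∀ v : V, (Finset.univ.filter (fun u => E u v)).card ≤ ℓ)
    (τ : ℕ) (P : ℕ → Finset V) (hP : IsBlackPebbling E z τ P)
    (s : ℕ) (hs : ∀ t ≤ τ, (P t).card ≤ s) :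
    ∀ t ≤ τ, ∃ n ≤ (2 * ℓ + 2) * t, Reach E z ∅ (units (P t)) n (s + 2) := by
  intro t
  induction t with
  | zero =>
    intro _
    refine ⟨0, by simp, ?_⟩
    rw [hP.1]
    have : units (∅ : Finset V) = ∅ := Finset.image_empty _
    rw [this]
    exact reach_refl (by simp)
  | succ t ih =>
    intro ht
    obtain ⟨n, hn, r⟩ := ih (by omega)
    have hcard := hs t (by omega)
    rcases hP.2.2 t (by omega) with ⟨v, hv, hp, heq⟩ | ⟨v, hv, heq⟩
    · have r2 := reach_place E z v (P t) (s + 2) hp (by omega)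
      have hd := hdeg v
      refine ⟨n + (1 + 2 * (Finset.univ.filter (fun u => E u v)).card), ?_,
        by rw [heq]; exact reach_trans r r2⟩
      set M := (2 * ℓ + 2) * t with hM
      have key : (2 * ℓ + 2) * (t + 1) = M + (2 * ℓ + 2) := by rw [hM]; ring
      rw [key]
      omega
    · have r2 := reach_remove E z v (P t) (s + 2) hv (by omega)
      refine ⟨n + 1, ?_, by rw [heq]; exact reach_trans r r2⟩
      set M := (2 * ℓ + 2) * t with hM
      have key : (2 * ℓ + 2) * (t + 1) = M + (2 * ℓ + 2) := by rw [hM]; ring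
      rw [key]
      omega

end Aux

/-- If a DAG with maximal in-degree ℓ has a complete black pebbling in time τ
and space s, then Peb(G) has a configuration-style resolution refutation of
length O(τ) and clause space O(s), with constants depending only on ℓ. -/
theorem stmt16 (ℓ : ℕ) :
    ∃ c : ℕ, ∀ (V : Type) [Fintype V] [DecidableEq V]
      (E : V → V → Prop) [DecidableRel E] (z : V),
      (∀ v : V, (Finset.univ.filter (fun u => E u v)).card ≤ ℓ) →
      ∀ (τ : ℕ) (P : ℕ → Finset V), IsBlackPebbling E z τ P →
      ∀ s : ℕ, (Finset.range (τ + 1)).sup (fun t => (P t).card) ≤ s →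
      ∃ (τ' : ℕ) (D : ℕ → Finset (Finset (V × Bool))),
        D 0 = ∅ ∧ (∅ : Finset (V × Bool)) ∈ D τ' ∧
        (∀ t < τ',
          (∃ C ∈ pebFormula V E z, D (t + 1) = insert C (D t)) ∨
          (∃ C₁ ∈ D t, ∃ C₂ ∈ D t, ∃ x : V,
              (x, true) ∈ C₁ ∧ (x, false) ∈ C₂ ∧
              D (t + 1) = insert (C₁.erase (x, true) ∪ C₂.erase (x, false)) (D t)) ∨
          (∃ C ∈ D t, D (t + 1) = (D t).erase C)) ∧
        τ' ≤ c * τ ∧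
        (Finset.range (τ' + 1)).sup (fun t => (D t).card) ≤ c * s := by
  refine ⟨2 * ℓ + 4, ?_⟩
  intro V _ _ E _ z hdeg τ P hP s hsup
  have hτ : 1 ≤ τ := by
    by_contra h
    have hτ0 : τ = 0 := by omega
    have h1 := hP.1
    have h2 := hP.2.1
    rw [hτ0] at h2
    rw [h1] at h2
    exact (Finset.singleton_ne_empty z) h2.symm
  have hs : ∀ t ≤ τ, (P t).card ≤ s := by
    intro t ht
    exact le_trans (Finset.le_sup (f := fun t => (P t).card)
      (Finset.mem_range.mpr (by omega))) hsup
  have hs1 : 1 ≤ s := by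
    have := hs τ le_rfl
    rw [hP.2.1] at this
    simpa using this
  obtain ⟨n, hn, r⟩ := reach_sim E z ℓ hdeg τ P hP s hs τ le_rfl
  rw [hP.2.1] at r
  have huz : units ({z} : Finset V) = {({(z, true)} : Finset (V × Bool))} :=
    Finset.image_singleton _ _
  rw [huz] at r
  set A₀ : Finset (Finset (V × Bool)) := {({(z, true)} : Finset (V × Bool))} with hA₀
  set A₁ : Finset (Finset (V × Bool)) := insert {(z, false)} A₀ with hA₁
  set A₂ : Finset (Finset (V × Bool)) := insert ∅ A₁ with hA₂
  have step1 : RStep E z A₀ A₁ :=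
    Or.inl ⟨{(z, false)}, Finset.mem_insert_self _ _, rfl⟩
  have step2 : RStep E z A₁ A₂ := by
    refine Or.inr (Or.inl ⟨{(z, true)}, Finset.mem_insert_of_mem (Finset.mem_singleton_self _),
      {(z, false)}, Finset.mem_insert_self _ _, z,
      Finset.mem_singleton_self _, Finset.mem_singleton_self _, ?_⟩)
    rw [Finset.erase_singleton, Finset.erase_singleton, Finset.empty_union]
  have r1 : Reach E z A₀ A₁ 1 (s + 2) :=
    reach_single step1 (by simp [hA₀]) (le_trans (Finset.card_insert_le _ _)
      (by simp [hA₀]))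
  have r2 : Reach E z A₁ A₂ 1 (s + 2) := by
    refine reach_single step2 ?_ ?_
    · refine le_trans (Finset.card_insert_le _ _) ?_
      simp only [hA₀, Finset.card_singleton]
      omega
    · refine le_trans (Finset.card_insert_le _ _)
        (le_trans (Nat.add_le_add_right (Finset.card_insert_le _ _) 1) ?_)
      simp only [hA₀, Finset.card_singleton]
      omega
  have rall : Reach E z ∅ A₂ (n + (1 + 1)) (s + 2) := reach_trans r (reach_trans r1 r2)
  obtain ⟨f, hf0, hfe, hfs, hfc⟩ := rall
  refine ⟨n + 2, f, hf0, ?_, ?_, ?_, ?_⟩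
  · rw [show n + 2 = n + (1 + 1) from by omega, hfe, hA₂]
    exact Finset.mem_insert_self _ _
  · intro t htlt
    exact hfs t (by omega)
  · set M := (2 * ℓ + 2) * τ with hM
    have key : (2 * ℓ + 4) * τ = M + 2 * τ := by rw [hM]; ring
    rw [key]
    omega
  · refine Finset.sup_le fun t htm => ?_
    have := hfc t (by have := Finset.mem_range.mp htm; omega)
    have h4 : 4 * s ≤ (2 * ℓ + 4) * s := Nat.mul_le_mul_right s (by omega)
    omega
end
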